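/- arXiv:2604.03420 — 3 statements merged into one kernel-verified Lean document; each statement's English description precedes it below -/
import Mathlib

section
/- Let T ∈ GL_n(ℝ) and R: ℝⁿ → ℝⁿ linear satisfy R(g^{⊙2}) = (Tg)^{⊙2} for all g ∈ ℝⁿ, where ⊙2 denotes coordinatewise squaring. Then every row of T has at most one nonzero entry; hence T = DP for a permutation matrix P and an invertible diagonal matrix D, and R = D²P. -/
open Matrix

theorem stmt_6 {n : ℕ} (T : Matrix (Fin n) (Fin n) ℝ) (hT : IsUnit T.det)
    (R : (Fin n → ℝ) →ₗ[ℝ] (Fin n → ℝ))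
    (hRT : ∀ g : Fin n → ℝ, R (fun i => (g i) ^ 2) = fun i => ((T *ᵥ g) i) ^ 2) :
    (∀ i j k, j ≠ k → T i j ≠ 0 → T i k = 0) ∧
    ∃ (P : Equiv.Perm (Fin n)) (d : Fin n → ℝ), (∀ i, d i ≠ 0) ∧
      T = Matrix.diagonal d * P.permMatrix ℝ ∧
      ∀ g : Fin n → ℝ, R g = (Matrix.diagonal (fun i => (d i) ^ 2) * P.permMatrix ℝ) *ᵥ g := by
  have mulVec_single' : ∀ (j : Fin n) i, (T *ᵥ (Pi.single j 1 : Fin n → ℝ)) i = T i j := by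
    intro j i
    simp [mulVec, dotProduct, Pi.single_apply]
  have sq_single : ∀ (j : Fin n),
      (fun i => ((Pi.single j 1 : Fin n → ℝ) i)^2) = (Pi.single j 1 : Fin n → ℝ) := by
    intro j; funext i; rcases eq_or_ne i j with h|h <;> simp [Pi.single_apply, h]
  have hRsingle : ∀ j, R (Pi.single j 1 : Fin n → ℝ) = fun i => (T i j)^2 := by
    intro j
    have h := hRT (Pi.single j 1 : Fin n → ℝ)
    rw [sq_single] at h
    rw [h]; funext i; rw [mulVec_single']
  have key : ∀ i j k, j ≠ k → T i j * T i k = 0 := by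
    intro i j k hjk
    set s : Fin n → ℝ := (Pi.single j 1 : Fin n → ℝ) + Pi.single k 1 with hs
    have h3 := hRT s
    have sqadd : (fun i => (s i)^2) = s := by
      funext x
      rw [hs]
      simp only [Pi.add_apply]
      rw [Pi.single_apply, Pi.single_apply]
      split_ifs with h1 h2
      · exact absurd (h1.symm.trans h2) hjk
      all_goals norm_num
    rw [sqadd, hs, map_add, hRsingle, hRsingle] at h3
    have h4 := congrFun h3 i
    simp only [Pi.add_apply, mulVec_add] at h4
    rw [mulVec_single', mulVec_single'] at h4
    nlinarith [h4]
  have hTzero : ∀ i j k, j ≠ k → T i j ≠ 0 → T i k = 0 := by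
    intro i j k hjk hj
    rcases mul_eq_zero.mp (key i j k hjk) with h|h
    · exact absurd h hj
    · exact h
  refine ⟨hTzero, ?_⟩
  have hdet : T.det ≠ 0 := hT.ne_zero
  have exnz : ∀ i, ∃ j, T i j ≠ 0 := by
    intro i
    by_contra h
    push_neg at h
    exact hdet (Matrix.det_eq_zero_of_row_eq_zero i h)
  choose f hf using exnz
  have hrow : ∀ i j, j ≠ f i → T i j = 0 := fun i j hj =>
    hTzero i (f i) j (Ne.symm hj) (hf i)
  have finj : Function.Injective f := by
    intro i1 i2 h12
    by_contra hne
    set v : Fin n → ℝ :=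
      Pi.single i1 (T i2 (f i2)) - Pi.single i2 (T i1 (f i1)) with hv
    have hvk : ∀ k, (v ᵥ* T) k = T i2 (f i2) * T i1 k - T i1 (f i1) * T i2 k := by
      intro k
      simp [hv, vecMul, dotProduct, Pi.single_apply, sub_mul, ite_mul,
        Finset.sum_sub_distrib]
    have hvmul : v ᵥ* T = 0 := by
      funext k
      rw [hvk k, Pi.zero_apply]
      rcases eq_or_ne k (f i1) with hk|hk
      · subst hk; rw [h12]; ring
      · rw [hrow i1 k hk, hrow i2 k (by rw [← h12]; exact hk)]; ring
    have hvz : v = 0 := by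
      have h1 : v ᵥ* (T * T⁻¹) = v := by
        rw [Matrix.mul_nonsing_inv T hT, Matrix.vecMul_one]
      rw [← Matrix.vecMul_vecMul, hvmul, Matrix.zero_vecMul] at h1
      exact h1.symm
    have hvi1 : v i1 = T i2 (f i2) := by
      simp [hv, Pi.single_apply, hne]
    rw [hvz] at hvi1
    exact hf i2 hvi1.symm
  have fbij : Function.Bijective f := Finite.injective_iff_bijective.mp finj
  set P : Equiv.Perm (Fin n) := Equiv.ofBijective f fbij with hP
  have hPapp : ∀ i, P i = f i := fun i => rfl
  have hperm : ∀ i j, (P.permMatrix ℝ) i j = if j = f i then 1 else 0 := by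
    intro i j
    simp [Equiv.Perm.permMatrix, PEquiv.toMatrix_apply, Equiv.toPEquiv_apply,
      hPapp, eq_comm]
  refine ⟨P, fun i => T i (f i), fun i => hf i, ?_, ?_⟩
  · ext i j
    rw [Matrix.diagonal_mul, hperm]
    rcases eq_or_ne j (f i) with hj|hj
    · rw [if_pos hj, hj, mul_one]
    · rw [if_neg hj, mul_zero, hrow i j hj]
  · intro g
    funext i
    have hg : g = ∑ j, g j • (Pi.single j 1 : Fin n → ℝ) := by
      funext x
      rw [Finset.sum_apply]
      simp [Pi.single_apply]
    have hRg : R g i = ∑ j, g j * (T i j)^2 := by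
      conv_lhs => rw [hg]
      rw [map_sum, Finset.sum_apply]
      refine Finset.sum_congr rfl fun j _ => ?_
      rw [LinearMap.map_smul, hRsingle]
      simp [smul_eq_mul]
    rw [hRg]
    rw [mulVec, dotProduct]
    refine Finset.sum_congr rfl fun j _ => ?_
    rw [Matrix.diagonal_mul, hperm]
    rcases eq_or_ne j (f i) with hj|hj
    · rw [if_pos hj, hj, mul_one, mul_comm]
    · rw [if_neg hj, mul_zero, zero_mul, hrow i j hj]
      ring
end

section
/- Let d ∈ ℝ with d ≠ 0 and ε > 0. If (1/d)/(√t + ε) = d/(|d|√t + ε) for all t ≥ 0, then |d| = 1. -/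
theorem stmt_8 (d ε : ℝ) (hd : d ≠ 0) (hε : 0 < ε)
    (h : ∀ t : ℝ, 0 ≤ t → (1 / d) / (Real.sqrt t + ε) = d / (|d| * Real.sqrt t + ε)) :
    |d| = 1 := by
  have h0 := h 0 le_rfl
  simp [Real.sqrt_zero] at h0
  have hε' : ε ≠ 0 := ne_of_gt hε
  field_simp at h0
  have hd2 : d * d = 1 := by
    nlinarith [h0, sq_nonneg (d*d-1), mul_pos hε hε]
  have := abs_nonneg d
  nlinarith [sq_abs d]
end

section
/- Under the hypotheses of the cubic remainder bound (∇g(ρ_R)=0, H = ∇²g(ρ_R) ≻ 0, Hessian L-Lipschitz on segments from ρ_R to 0 and to λ*ρ_D), with c := cos_H²(ρ_D, ρ_R) ∈ [0,1] and λ* the quadratic-optimal donor scale, the error ε := (g(0) − g(λ*ρ_D)) − c·(g(0) − g(ρ_R)) satisfies |ε| ≤ (L/6)(‖ρ_R‖³ + ‖λ*ρ_D − ρ_R‖³). -/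
/-!
Put `v = λ* ρ_D - ρ_R`. Since `H` is symmetric, `λ*` is the `H`-projection coefficient of `ρ_R`
on `ρ_D`, so `H v v = (1 - c) H ρ_R ρ_R`, and `H v v ≥ 0` gives `c ≤ 1`. The gradient vanishes
at `ρ_R`, so the quadratic parts of the second-order Taylor expansions of `g` at `ρ_R`, evaluated
at `0` and at `λ* ρ_D`, cancel in `ε`, leaving `ε = (1 - c) r(0) - r(λ* ρ_D)`. Each cubic
remainder is at most `(L/6)‖x - ρ_R‖³`: integrate the Lipschitz bound on the Hessian twice
along the segment.
-/

open Set

lemma abs_le_of_abs_deriv_le_mul_pow {f f' : ℝ → ℝ} {K T : ℝ} (k : ℕ)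
    (hf : ∀ t ∈ Icc 0 T, HasDerivAt f (f' t) t) (h0 : f 0 = 0)
    (hbound : ∀ t ∈ Icc 0 T, |f' t| ≤ K * t ^ k) :
    ∀ t ∈ Icc 0 T, |f t| ≤ K * t ^ (k + 1) / (k + 1) := by
  have hB : ∀ t, HasDerivAt (fun t => K * t ^ (k + 1) / (k + 1)) (K * t ^ k) t := fun t =>
    (((hasDerivAt_pow (k + 1) t).const_mul K).div_const _).congr_deriv (by push_cast; field_simp)
  exact image_norm_le_of_norm_deriv_right_le_deriv_boundary
    (fun t ht => (hf t ht).continuousAt.continuousWithinAt)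
    (fun t ht => (hf t (Ico_subset_Icc_self ht)).hasDerivWithinAt)
    (by simp [h0]) hB (fun t ht => hbound t (Ico_subset_Icc_self ht))

lemma abs_taylor_two_remainder_le_real {φ ψ B : ℝ → ℝ} {K : ℝ}
    (hφ : ∀ t ∈ Icc (0 : ℝ) 1, HasDerivAt φ (ψ t) t)
    (hψ : ∀ t ∈ Icc (0 : ℝ) 1, HasDerivAt ψ (B t) t)
    (hB : ∀ t ∈ Icc (0 : ℝ) 1, |B t - B 0| ≤ K * t) :
    |φ 1 - φ 0 - ψ 0 - B 0 / 2| ≤ K / 6 := by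
  have hψ_taylor : ∀ t ∈ Icc (0 : ℝ) 1, |ψ t - ψ 0 - t * B 0| ≤ K / 2 * t ^ 2 := by
    intro t ht
    have hbound := abs_le_of_abs_deriv_le_mul_pow (f := fun t => ψ t - ψ 0 - t * B 0)
      (f' := fun t => B t - B 0) 1
      (fun t ht => ((hψ t ht).sub_const _).sub ((hasDerivAt_id t).mul_const _) |>.congr_deriv
        (by simp)) (by simp) (by simpa using hB) t ht
    norm_num at hbound
    linarith
  have := abs_le_of_abs_deriv_le_mul_pow
    (f := fun t => φ t - φ 0 - t * ψ 0 - t ^ 2 / 2 * B 0) 2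
    (fun t ht => (((hφ t ht).sub_const _).sub ((hasDerivAt_id t).mul_const _)).sub
      (((hasDerivAt_pow 2 t).div_const 2).mul_const _) |>.congr_deriv (by simp))
    (by simp) hψ_taylor 1 (by simp)
  norm_num at this
  rw [div_div, one_div_mul_eq_div] at this
  linarith

theorem abs_taylor_two_remainder_le {E : Type*} [NormedAddCommGroup E] [NormedSpace ℝ E]
    {g : E → ℝ} {s : Set E} (hs : IsOpen s) (hg : ContDiffOn ℝ 2 g s) {a x : E}
    (hseg : segment ℝ a x ⊆ s) {L : ℝ}
    (hLip : ∀ y ∈ s, ‖fderiv ℝ (fderiv ℝ g) y - fderiv ℝ (fderiv ℝ g) a‖ ≤ L * ‖y - a‖) :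
    |g x - g a - fderiv ℝ g a (x - a) - fderiv ℝ (fderiv ℝ g) a (x - a) (x - a) / 2|
      ≤ L / 6 * ‖x - a‖ ^ 3 := by
  set v := x - a
  have hline : ∀ t ∈ Icc (0 : ℝ) 1, a + t • v ∈ s := fun t ht =>
    hseg (segment_eq_image' ℝ a x ▸ mem_image_of_mem _ ht)
  have hline' : ∀ t : ℝ, HasDerivAt (fun t : ℝ => a + t • v) v t := fun t => by
    simpa using ((hasDerivAt_id t).smul_const v).const_add a
  have hC2 : ∀ y ∈ s, ContDiffAt ℝ 2 g y := fun y hy => hg.contDiffAt (hs.mem_nhds hy)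
  have hg' : ∀ y ∈ s, HasFDerivAt g (fderiv ℝ g y) y := fun y hy =>
    ((hC2 y hy).differentiableAt (by norm_num)).hasFDerivAt
  have hg'' : ∀ y ∈ s, HasFDerivAt (fderiv ℝ g) (fderiv ℝ (fderiv ℝ g) y) y := fun y hy =>
    (((hC2 y hy).fderiv_right (m := 1) le_rfl).differentiableAt one_ne_zero).hasFDerivAt
  have key := abs_taylor_two_remainder_le_real (K := L * ‖v‖ ^ 3)
    (φ := fun t => g (a + t • v)) (ψ := fun t => fderiv ℝ g (a + t • v) v)
    (B := fun t => fderiv ℝ (fderiv ℝ g) (a + t • v) v v)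
    (fun t ht => (hg' _ (hline t ht)).comp_hasDerivAt t (hline' t))
    (fun t ht => (ContinuousLinearMap.apply ℝ ℝ v).hasFDerivAt.comp_hasDerivAt t
      ((hg'' _ (hline t ht)).comp_hasDerivAt t (hline' t)))
    (fun t ht => by
      calc |fderiv ℝ (fderiv ℝ g) (a + t • v) v v - fderiv ℝ (fderiv ℝ g) (a + (0 : ℝ) • v) v v|
          = ‖(fderiv ℝ (fderiv ℝ g) (a + t • v) - fderiv ℝ (fderiv ℝ g) a) v v‖ := by simp
        _ ≤ ‖fderiv ℝ (fderiv ℝ g) (a + t • v) - fderiv ℝ (fderiv ℝ g) a‖ * ‖v‖ * ‖v‖ :=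
          ContinuousLinearMap.le_opNorm₂ _ _ _
        _ ≤ L * ‖t • v‖ * ‖v‖ * ‖v‖ := by
          gcongr
          simpa using hLip _ (hline t ht)
        _ = L * ‖v‖ ^ 3 * t := by
          rw [norm_smul, Real.norm_of_nonneg ht.1]
          ring)
  simp only [zero_smul, add_zero, one_smul, v, add_sub_cancel] at key
  convert key using 1
  ring

lemma apply_div_smul_sub_self {E : Type*} [NormedAddCommGroup E] [NormedSpace ℝ E]
    {H : E →L[ℝ] E →L[ℝ] ℝ} (hH : ∀ x y, H x y = H y x) {u w : E} (hu : H u u ≠ 0) :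
    H ((H u w / H u u) • u - w) ((H u w / H u u) • u - w) = H w w - H u w ^ 2 / H u u := by
  simp only [map_sub, map_smul, sub_apply, smul_apply, smul_eq_mul, hH w u]
  field_simp
  ring

theorem stmt_16 {n : ℕ} (g : EuclideanSpace ℝ (Fin n) → ℝ)
    (s : Set (EuclideanSpace ℝ (Fin n))) (hs : IsOpen s) (hconv : Convex ℝ s)
    (ρD ρR : EuclideanSpace ℝ (Fin n)) (hD : ρD ≠ 0) (hR : ρR ≠ 0)
    (hρR : ρR ∈ s) (h0 : (0 : EuclideanSpace ℝ (Fin n)) ∈ s)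
    (hg : ContDiffOn ℝ 2 g s)
    (hgrad : fderiv ℝ g ρR = 0)
    (H : EuclideanSpace ℝ (Fin n) →L[ℝ] EuclideanSpace ℝ (Fin n) →L[ℝ] ℝ)
    (hH : H = fderiv ℝ (fderiv ℝ g) ρR)
    (hpos : ∀ v : EuclideanSpace ℝ (Fin n), v ≠ 0 → 0 < H v v)
    (lstar : ℝ) (hls : lstar = H ρD ρR / H ρD ρD)
    (hmem : lstar • ρD ∈ s)
    (c : ℝ) (hc : c = (H ρD ρR) ^ 2 / (H ρD ρD * H ρR ρR))
    (L : ℝ)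
    (hLip : ∀ x ∈ s, ∀ y ∈ s,
      ‖fderiv ℝ (fderiv ℝ g) x - fderiv ℝ (fderiv ℝ g) y‖ ≤ L * ‖x - y‖) :
    |(g 0 - g (lstar • ρD)) - c * (g 0 - g ρR)|
      ≤ L / 6 * (‖ρR‖ ^ 3 + ‖lstar • ρD - ρR‖ ^ 3) := by
  have hsymm : ∀ x y, H x y = H y x :=
    hH ▸ (hg.contDiffAt (hs.mem_nhds hρR)).isSymmSndFDerivAt (by simp)
  have hDD : 0 < H ρD ρD := hpos ρD hD
  have hRR : 0 < H ρR ρR := hpos ρR hR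
  have hHv : H (lstar • ρD - ρR) (lstar • ρD - ρR) = (1 - c) * H ρR ρR := by
    rw [hls, apply_div_smul_sub_self hsymm hDD.ne', hc]
    field_simp
  have hc0 : 0 ≤ c := hc ▸ by positivity
  have hc1 : c ≤ 1 := by
    have hv_nonneg : 0 ≤ (1 - c) * H ρR ρR := by
      rw [← hHv]
      rcases eq_or_ne (lstar • ρD - ρR) 0 with hv | hv
      · simp [hv]
      · exact (hpos _ hv).le
    nlinarith
  have hT0 := abs_taylor_two_remainder_le hs hg (hconv.segment_subset hρR h0)
    (fun y hy => hLip y hy ρR hρR)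
  have hT1 := abs_taylor_two_remainder_le hs hg (hconv.segment_subset hρR hmem)
    (fun y hy => hLip y hy ρR hρR)
  rw [hgrad, ← hH] at hT0 hT1
  rw [hHv] at hT1
  simp only [zero_apply, zero_sub, map_neg, neg_apply, neg_neg, neg_zero,
    sub_zero, norm_neg] at hT0 hT1
  calc |(g 0 - g (lstar • ρD)) - c * (g 0 - g ρR)|
      = |(1 - c) * (g 0 - g ρR - H ρR ρR / 2)
          - (g (lstar • ρD) - g ρR - (1 - c) * H ρR ρR / 2)| := by ring_nf
    _ ≤ |g 0 - g ρR - H ρR ρR / 2| + |g (lstar • ρD) - g ρR - (1 - c) * H ρR ρR / 2| := by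
      refine (abs_sub _ _).trans (add_le_add ?_ le_rfl)
      rw [abs_mul, abs_of_nonneg (by linarith)]
      exact mul_le_of_le_one_left (abs_nonneg _) (by linarith)
    _ ≤ L / 6 * (‖ρR‖ ^ 3 + ‖lstar • ρD - ρR‖ ^ 3) := by linarith
end
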